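/- arXiv:2110.03079 — 3 statements merged into one kernel-verified Lean document; each statement's English description precedes it below -/
import Mathlib

section
/- Let t₀ < t₁ and α, β ∈ ℝ. Let f : ℝ×ℝ×ℝ → ℝ be continuous, h : ℝ → ℝ continuous on [t₀,t₁], φ : ℝ×ℝ → ℝ continuously differentiable, and ℓ₀, ℓ₁ ∈ ℝ. Suppose (i) f(x,y,z) + Dφ(x,y,z) ≥ h(x) for every x ∈ [t₀,t₁] and all y, z ∈ ℝ, (ii) φ(t₀,α) ≥ ℓ₀, and (iii) −φ(t₁,β) ≥ ℓ₁. Then every continuously differentiable u : ℝ → ℝ with u(t₀) = α and u(t₁) = β satisfies ∫_{t₀}^{t₁} f(x, u(x), u'(x)) dx ≥ ∫_{t₀}^{t₁} h(x) dx + ℓ₀ + ℓ₁. -/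
/-!
Along any C¹ curve `x ↦ (x, u x)` the chain rule identifies `Dφ(x, u x, u' x)` with the
derivative of `x ↦ φ(x, u x)`, so its integral over `[t₀, t₁]` is `φ(t₁, β) - φ(t₀, α)` and only
depends on the boundary data. Integrating the pointwise bound `f + Dφ ≥ h` along the curve and
inserting the two boundary inequalities gives the estimate.
-/

open Real MeasureTheory Set

noncomputable section

variable {φ : ℝ → ℝ → ℝ}

def totalDeriv (φ : ℝ → ℝ → ℝ) (x y z : ℝ) : ℝ :=
  deriv (fun s => φ s y) x + deriv (fun t => φ x t) y * z

theorem deriv_fst_eq_fderiv_uncurry {x y : ℝ}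
    (hφ : DifferentiableAt ℝ (Function.uncurry φ) (x, y)) :
    deriv (φ · y) x = fderiv ℝ (Function.uncurry φ) (x, y) (1, 0) :=
  (hφ.hasFDerivAt.comp_hasDerivAt_of_eq x ((hasDerivAt_id x).prodMk (hasDerivAt_const x y))
    rfl).deriv

theorem deriv_snd_eq_fderiv_uncurry {x y : ℝ}
    (hφ : DifferentiableAt ℝ (Function.uncurry φ) (x, y)) :
    deriv (φ x ·) y = fderiv ℝ (Function.uncurry φ) (x, y) (0, 1) :=
  (hφ.hasFDerivAt.comp_hasDerivAt y ((hasDerivAt_const y x).prodMk (hasDerivAt_id y))).deriv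

theorem totalDeriv_eq_fderiv_uncurry {x y : ℝ}
    (hφ : DifferentiableAt ℝ (Function.uncurry φ) (x, y)) (z : ℝ) :
    totalDeriv φ x y z = fderiv ℝ (Function.uncurry φ) (x, y) (1, z) := by
  have hsplit : ((1 : ℝ), z) = (1, 0) + z • ((0 : ℝ), (1 : ℝ)) := by simp
  rw [totalDeriv, deriv_fst_eq_fderiv_uncurry hφ, deriv_snd_eq_fderiv_uncurry hφ, hsplit,
    map_add, map_smul, smul_eq_mul, mul_comm]

theorem continuous_totalDeriv (hφ : ContDiff ℝ 1 (Function.uncurry φ)) :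
    Continuous fun p : ℝ × ℝ × ℝ => totalDeriv φ p.1 p.2.1 p.2.2 := by
  have hdiff : Differentiable ℝ (Function.uncurry φ) := hφ.differentiable one_ne_zero
  simp only [totalDeriv_eq_fderiv_uncurry (hdiff _)]
  exact ((hφ.continuous_fderiv one_ne_zero).comp (by fun_prop)).clm_apply (by fun_prop)

theorem hasDerivAt_comp_graph {u : ℝ → ℝ} {u' x : ℝ}
    (hφ : DifferentiableAt ℝ (Function.uncurry φ) (x, u x)) (hu : HasDerivAt u u' x) :
    HasDerivAt (fun x => φ x (u x)) (totalDeriv φ x (u x) u') x := by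
  rw [totalDeriv_eq_fderiv_uncurry hφ]
  exact hφ.hasFDerivAt.comp_hasDerivAt x ((hasDerivAt_id x).prodMk hu)

theorem integral_totalDeriv_comp_graph (hφ : ContDiff ℝ 1 (Function.uncurry φ))
    {u : ℝ → ℝ} (hu : ContDiff ℝ 1 u) (a b : ℝ) :
    ∫ x in a..b, totalDeriv φ x (u x) (deriv u x) = φ b (u b) - φ a (u a) := by
  have hu_diff : Differentiable ℝ u := hu.differentiable one_ne_zero
  have hcont : Continuous fun x => totalDeriv φ x (u x) (deriv u x) :=
    (continuous_totalDeriv hφ).comp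
      (continuous_id.prodMk (hu.continuous.prodMk (hu.continuous_deriv le_rfl)))
  exact intervalIntegral.integral_eq_sub_of_hasDerivAt
    (fun x _ => hasDerivAt_comp_graph ((hφ.differentiable one_ne_zero) _) (hu_diff x).hasDerivAt)
    (hcont.intervalIntegrable a b)

end

theorem stmt_1
    (t₀ t₁ : ℝ) (ht : t₀ < t₁) (α β : ℝ)
    (f : ℝ → ℝ → ℝ → ℝ) (hf : Continuous fun p : ℝ × ℝ × ℝ => f p.1 p.2.1 p.2.2)
    (h : ℝ → ℝ) (hh : ContinuousOn h (Icc t₀ t₁))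
    (φ : ℝ → ℝ → ℝ) (hφ : ContDiff ℝ 1 fun p : ℝ × ℝ => φ p.1 p.2)
    (ℓ₀ ℓ₁ : ℝ)
    (hpoint : ∀ x ∈ Icc t₀ t₁, ∀ y z : ℝ,
      f x y z + deriv (fun s => φ s y) x + deriv (fun t => φ x t) y * z ≥ h x)
    (hbd0 : φ t₀ α ≥ ℓ₀) (hbd1 : -φ t₁ β ≥ ℓ₁)
    (u : ℝ → ℝ) (hu : ContDiff ℝ 1 u) (hu0 : u t₀ = α) (hu1 : u t₁ = β) :
    (∫ x in t₀..t₁, f x (u x) (deriv u x)) ≥ (∫ x in t₀..t₁, h x) + ℓ₀ + ℓ₁ := by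
  have hcurve : Continuous fun x => (x, u x, deriv u x) :=
    continuous_id.prodMk (hu.continuous.prodMk (hu.continuous_deriv le_rfl))
  have hF : IntervalIntegrable (fun x => f x (u x) (deriv u x)) volume t₀ t₁ :=
    (hf.comp hcurve).intervalIntegrable t₀ t₁
  have hD :
      IntervalIntegrable (fun x => totalDeriv φ x (u x) (deriv u x)) volume t₀ t₁ :=
    ((continuous_totalDeriv hφ).comp hcurve).intervalIntegrable t₀ t₁
  have hmono : (∫ x in t₀..t₁, h x) ≤
      ∫ x in t₀..t₁, f x (u x) (deriv u x) + totalDeriv φ x (u x) (deriv u x) :=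
    intervalIntegral.integral_mono_on ht.le (hh.intervalIntegrable_of_Icc ht.le) (hF.add hD)
      fun x hx => by rw [totalDeriv, ← add_assoc]; exact hpoint x hx _ _
  rw [intervalIntegral.integral_add hF hD, integral_totalDeriv_comp_graph hφ hu, hu0, hu1]
    at hmono
  linarith
end

section
/- Let n ≥ 1 and let U ⊆ ℝⁿ be open. Let A : U → ℝ^{n×n} be continuously differentiable with A(x) symmetric and positive definite for every x ∈ U, let b, c : U → ℝ with c(x) > 0 on U, and let u : U → ℝ be twice continuously differentiable with u(x) > 0 on U and satisfying the Euler–Lagrange equation −div(x ↦ A(x)∇u(x)) + b(x)·u(x) = c(x) on U. Define F : U → ℝⁿ by F(x) = −A(x)∇u(x)/u(x). Then for every x ∈ U, every y ∈ ℝ and every z ∈ ℝⁿ: ⟨z, A(x)z⟩ + b(x)·y² − 2c(x)·y + (div F)(x)·y² + 2y·⟨F(x), z⟩ ≥ −c(x)·u(x). -/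
open Set

/-- The gradient of a scalar function on `ℝⁿ`, as the vector of partial derivatives. -/
noncomputable def pgrad {n : ℕ} (u : (Fin n → ℝ) → ℝ) (x : Fin n → ℝ) : Fin n → ℝ :=
  fun i => fderiv ℝ u x (Pi.single i 1)

/-- The divergence of a vector field on `ℝⁿ`: `div G (x) = Σᵢ ∂Gᵢ/∂xᵢ (x)`. -/
noncomputable def pdiv {n : ℕ} (G : (Fin n → ℝ) → (Fin n → ℝ)) (x : Fin n → ℝ) : ℝ :=
  ∑ i, fderiv ℝ G x (Pi.single i 1) i

/-!
Write `g = ∇u(x)` and `v = -g / u(x)`, so that `F(x) = A(x) v`. The quotient rule for the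
divergence together with the Euler–Lagrange equation gives the key identity
`b + div F = c / u + ⟨v, A v⟩` at `x`. Substituting it, the left-hand side plus `c u` becomes
`⟨z + y v, A (z + y v)⟩ + (c / u) (y - u)²`, which is nonnegative because `A(x)` is positive
semidefinite and `c / u > 0`.
-/

open Filter Topology Matrix

theorem DifferentiableAt.mulVec {E ι : Type*} [NormedAddCommGroup E] [NormedSpace ℝ E]
    [Fintype ι] {A : E → Matrix ι ι ℝ} {w : E → ι → ℝ} {x : E}
    (hA : ∀ i j, DifferentiableAt ℝ (fun x => A x i j) x) (hw : DifferentiableAt ℝ w x) :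
    DifferentiableAt ℝ (fun x => A x *ᵥ w x) x :=
  differentiableAt_pi.2 fun i =>
    DifferentiableAt.fun_sum fun j _ => (hA i j).mul (differentiableAt_pi.1 hw j)

theorem Matrix.PosSemidef.dotProduct_mulVec_sub_smul_nonneg {ι : Type*} [Fintype ι]
    {M : Matrix ι ι ℝ} (hM : M.PosSemidef) (z g : ι → ℝ) (t : ℝ) :
    0 ≤ z ⬝ᵥ M *ᵥ z - 2 * t * (M *ᵥ g ⬝ᵥ z) + t ^ 2 * (g ⬝ᵥ M *ᵥ g) := by
  have hsymm : g ⬝ᵥ M *ᵥ z = M *ᵥ g ⬝ᵥ z := by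
    rw [dotProduct_mulVec, ← vecMul_transpose, ← conjTranspose_eq_transpose_of_trivial,
      hM.isHermitian.eq, dotProduct_comm]
  have h := hM.dotProduct_mulVec_nonneg (z - t • g)
  simp only [star_trivial, mulVec_sub, mulVec_smul, sub_dotProduct, dotProduct_sub,
    smul_dotProduct, dotProduct_smul, smul_eq_mul, hsymm, dotProduct_comm z (M *ᵥ g)] at h
  linear_combination h

section Calculus

variable {n : ℕ} {x : Fin n → ℝ}

theorem pdiv_congr_of_eventuallyEq {F G : (Fin n → ℝ) → Fin n → ℝ} (h : F =ᶠ[𝓝 x] G) :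
    pdiv F x = pdiv G x := by
  simp only [pdiv, h.fderiv_eq]

theorem pdiv_neg (G : (Fin n → ℝ) → Fin n → ℝ) : pdiv (fun x => -G x) x = -pdiv G x := by
  simp [pdiv, fderiv_fun_neg]

theorem pdiv_smul {φ : (Fin n → ℝ) → ℝ} {G : (Fin n → ℝ) → Fin n → ℝ}
    (hφ : DifferentiableAt ℝ φ x) (hG : DifferentiableAt ℝ G x) :
    pdiv (fun x => φ x • G x) x = φ x * pdiv G x + pgrad φ x ⬝ᵥ G x := by
  simp [pdiv, pgrad, fderiv_fun_smul hφ hG, Finset.sum_add_distrib, Finset.mul_sum, dotProduct]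

theorem pgrad_inv {u : (Fin n → ℝ) → ℝ} (hu : DifferentiableAt ℝ u x) (hux : u x ≠ 0) :
    pgrad (fun x => (u x)⁻¹) x = -(u x ^ 2)⁻¹ • pgrad u x := by
  ext i
  simp [pgrad, fderiv_fun_comp x (differentiableAt_inv hux) hu, fderiv_inv, mul_comm]

theorem differentiableAt_pgrad {u : (Fin n → ℝ) → ℝ} (hu : ContDiffAt ℝ 2 u x) :
    DifferentiableAt ℝ (pgrad u) x :=
  differentiableAt_pi.2 fun i =>
    ((hu.fderiv_right (m := 1) (by norm_num)).differentiableAt one_ne_zero).clm_apply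
      (differentiableAt_const _)

theorem pdiv_neg_mulVec_pgrad_div {A : (Fin n → ℝ) → Matrix (Fin n) (Fin n) ℝ}
    {u : (Fin n → ℝ) → ℝ} {F : (Fin n → ℝ) → Fin n → ℝ}
    (hA : ∀ i j, DifferentiableAt ℝ (fun x => A x i j) x) (hu : ContDiffAt ℝ 2 u x)
    (hux : u x ≠ 0) (hF : ∀ᶠ x' in 𝓝 x, F x' = fun i => -(A x' *ᵥ pgrad u x') i / u x') :
    pdiv F x = -(u x)⁻¹ * pdiv (fun x' => A x' *ᵥ pgrad u x') x
      + (u x ^ 2)⁻¹ * (pgrad u x ⬝ᵥ A x *ᵥ pgrad u x) := by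
  have hF' : F =ᶠ[𝓝 x] fun x' => -((u x')⁻¹ • A x' *ᵥ pgrad u x') := by
    filter_upwards [hF] with x' hx'
    ext i
    simp [hx', div_eq_inv_mul]
  have hu₁ : DifferentiableAt ℝ u x := hu.differentiableAt two_ne_zero
  rw [pdiv_congr_of_eventuallyEq hF', pdiv_neg,
    pdiv_smul (φ := fun x => (u x)⁻¹) (hu₁.inv hux) ((differentiableAt_pgrad hu).mulVec hA),
    pgrad_inv hu₁ hux, smul_dotProduct, smul_eq_mul]
  ring

end Calculus

theorem stmt_9_general
    (n : ℕ)
    (U : Set (Fin n → ℝ)) (hU : IsOpen U)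
    (A : (Fin n → ℝ) → Matrix (Fin n) (Fin n) ℝ)
    (hA : ∀ i j, ContDiffOn ℝ 1 (fun x => A x i j) U)
    (hApos : ∀ x ∈ U, (A x).PosDef)
    (b c : (Fin n → ℝ) → ℝ) (hc : ∀ x ∈ U, 0 < c x)
    (u : (Fin n → ℝ) → ℝ) (hu : ContDiffOn ℝ 2 u U) (hupos : ∀ x ∈ U, 0 < u x)
    (hEL : ∀ x ∈ U,
      -pdiv (fun x' => (A x').mulVec (pgrad u x')) x + b x * u x = c x)
    (F : (Fin n → ℝ) → (Fin n → ℝ))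
    (hF : ∀ x ∈ U, F x = fun i => -((A x).mulVec (pgrad u x) i) / u x)
    (x : Fin n → ℝ) (hx : x ∈ U) (y : ℝ) (z : Fin n → ℝ) :
    (∑ i, z i * (A x).mulVec z i) + b x * y^2 - 2 * c x * y + pdiv F x * y^2
      + 2 * y * (∑ i, F x i * z i) ≥ -(c x * u x) := by
  have hUx : U ∈ 𝓝 x := hU.mem_nhds hx
  have hux : 0 < u x := hupos x hx
  have hdivF := pdiv_neg_mulVec_pgrad_div
    (fun i j => ((hA i j).contDiffAt hUx).differentiableAt one_ne_zero) (hu.contDiffAt hUx)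
    hux.ne' (eventually_of_mem hUx hF)
  rw [show pdiv (fun x' => A x' *ᵥ pgrad u x') x = b x * u x - c x by linarith [hEL x hx]]
    at hdivF
  have hFz : ∑ i, F x i * z i = -(u x)⁻¹ * (A x *ᵥ pgrad u x ⬝ᵥ z) := by
    simp [hF x hx, dotProduct, Finset.mul_sum, div_eq_inv_mul, mul_assoc]
  have hQ := (hApos x hx).posSemidef.dotProduct_mulVec_sub_smul_nonneg z (pgrad u x) (y / u x)
  have hcx : 0 ≤ c x / u x * (y - u x) ^ 2 := by
    have := hc x hx
    positivity
  change z ⬝ᵥ A x *ᵥ z + _ - _ + _ + _ ≥ _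
  rw [hdivF, hFz, ge_iff_le, ← sub_nonneg]
  refine (add_nonneg hQ hcx).trans_eq ?_
  linear_combination (b x * y ^ 2 - 2 * c x * y + c x * u x) * mul_inv_cancel₀ hux.ne'

theorem stmt_9
    (n : ℕ) (hn : 1 ≤ n)
    (U : Set (Fin n → ℝ)) (hU : IsOpen U)
    (A : (Fin n → ℝ) → Matrix (Fin n) (Fin n) ℝ)
    (hA : ∀ i j, ContDiffOn ℝ 1 (fun x => A x i j) U)
    (hAsymm : ∀ x ∈ U, (A x).IsSymm)
    (hApos : ∀ x ∈ U, (A x).PosDef)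
    (b c : (Fin n → ℝ) → ℝ) (hc : ∀ x ∈ U, 0 < c x)
    (u : (Fin n → ℝ) → ℝ) (hu : ContDiffOn ℝ 2 u U) (hupos : ∀ x ∈ U, 0 < u x)
    (hEL : ∀ x ∈ U,
      -pdiv (fun x' => (A x').mulVec (pgrad u x')) x + b x * u x = c x)
    (F : (Fin n → ℝ) → (Fin n → ℝ))
    (hF : ∀ x ∈ U, F x = fun i => -((A x).mulVec (pgrad u x) i) / u x)
    (x : Fin n → ℝ) (hx : x ∈ U) (y : ℝ) (z : Fin n → ℝ) :
    (∑ i, z i * (A x).mulVec z i) + b x * y^2 - 2 * c x * y + pdiv F x * y^2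
      + 2 * y * (∑ i, F x i * z i) ≥ -(c x * u x) :=
  stmt_9_general n U hU A hA hApos b c hc u hu hupos hEL F hF x hx y z
end

section
/- Let t₀ < t₁ and let u, v : ℝ → ℝ be continuous on [t₀,t₁]. Then the following are equivalent: (i) u(x) = u(t₀) + ∫_{t₀}^{x} v(t) dt for every x ∈ [t₀,t₁]; (ii) for every continuously differentiable φ : ℝ×ℝ → ℝ, ∫_{t₀}^{t₁} (∂φ/∂x(t, u(t)) + ∂φ/∂y(t, u(t))·v(t)) dt = φ(t₁, u(t₁)) − φ(t₀, u(t₀)). -/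
/-!
If `u` is a primitive of `v`, the identity is the fundamental theorem of calculus applied to
`t ↦ φ t (u t)`, whose derivative is given by the chain rule. Conversely, let `w` be the primitive
of `v` with `w t₀ = u t₀`; it satisfies the identity too. Testing both with `φ x y = y` gives
`u t₁ = w t₁`, and testing with `φ x y = y * ψ x` gives `∫ (u - w) ψ' = 0` for every `C¹` function
`ψ`. Taking for `ψ'` a continuous extension of `u - w` yields `∫ (u - w)² = 0`, so `u = w`.
-/

open Real MeasureTheory Set

section PartialDerivatives

variable {φ : ℝ → ℝ → ℝ}

lemma hasDerivAt_left_slice {x y : ℝ}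
    (hφ : DifferentiableAt ℝ (fun p : ℝ × ℝ => φ p.1 p.2) (x, y)) :
    HasDerivAt (fun s => φ s y) (fderiv ℝ (fun p : ℝ × ℝ => φ p.1 p.2) (x, y) (1, 0)) x :=
  hφ.hasFDerivAt.comp_hasDerivAt (f := fun s => (s, y)) x
    ((hasDerivAt_id' x).prodMk (hasDerivAt_const x y))

lemma hasDerivAt_right_slice {x y : ℝ}
    (hφ : DifferentiableAt ℝ (fun p : ℝ × ℝ => φ p.1 p.2) (x, y)) :
    HasDerivAt (fun r => φ x r) (fderiv ℝ (fun p : ℝ × ℝ => φ p.1 p.2) (x, y) (0, 1)) y :=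
  hφ.hasFDerivAt.comp_hasDerivAt (f := fun r => (x, r)) y
    ((hasDerivAt_const y x).prodMk (hasDerivAt_id' y))

lemma continuous_deriv_left_slice (hφ : ContDiff ℝ 1 (fun p : ℝ × ℝ => φ p.1 p.2)) :
    Continuous fun p : ℝ × ℝ => deriv (fun s => φ s p.2) p.1 := by
  have hdiff := hφ.differentiable one_ne_zero
  simp_rw [fun p : ℝ × ℝ => (hasDerivAt_left_slice (hdiff (p.1, p.2))).deriv]
  exact (hφ.continuous_fderiv one_ne_zero).clm_apply continuous_const

lemma continuous_deriv_right_slice (hφ : ContDiff ℝ 1 (fun p : ℝ × ℝ => φ p.1 p.2)) :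
    Continuous fun p : ℝ × ℝ => deriv (fun r => φ p.1 r) p.2 := by
  have hdiff := hφ.differentiable one_ne_zero
  simp_rw [fun p : ℝ × ℝ => (hasDerivAt_right_slice (hdiff (p.1, p.2))).deriv]
  exact (hφ.continuous_fderiv one_ne_zero).clm_apply continuous_const

lemma hasDerivAt_comp_graph_s14 {u : ℝ → ℝ} {t u' : ℝ}
    (hφ : DifferentiableAt ℝ (fun p : ℝ × ℝ => φ p.1 p.2) (t, u t)) (hu : HasDerivAt u u' t) :
    HasDerivAt (fun s => φ s (u s))
      (deriv (fun s => φ s (u t)) t + deriv (fun r => φ t r) (u t) * u') t := by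
  have hsplit : ((1 : ℝ), u') = ((1 : ℝ), (0 : ℝ)) + u' • ((0 : ℝ), (1 : ℝ)) := by simp
  have := hφ.hasFDerivAt.comp_hasDerivAt t ((hasDerivAt_id' t).prodMk hu)
  rwa [hsplit, map_add, map_smul, smul_eq_mul, mul_comm, ← (hasDerivAt_left_slice hφ).deriv,
    ← (hasDerivAt_right_slice hφ).deriv] at this

end PartialDerivatives

lemma eqOn_zero_of_forall_integral_mul_eq_zero {a b : ℝ} {f : ℝ → ℝ} (hab : a < b)
    (hf : ContinuousOn f (Icc a b))
    (h : ∀ η : ℝ → ℝ, Continuous η → ∫ t in a..b, f t * η t = 0) :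
    EqOn f 0 (Icc a b) := by
  set η := IccExtend hab.le ((Icc a b).domRestrict f)
  have hsq : ∫ t in a..b, f t ^ 2 = 0 := by
    rw [← h η hf.domRestrict.Icc_extend']
    refine intervalIntegral.integral_congr fun t ht => ?_
    rw [uIcc_of_le hab.le] at ht
    simp [η, IccExtend_of_mem _ _ ht, sq]
  have hae : (fun t => f t ^ 2) =ᵐ[volume.restrict (Icc a b)] 0 := by
    rwa [← Measure.restrict_congr_set Ioc_ae_eq_Icc,
      ← intervalIntegral.integral_eq_zero_iff_of_le_of_nonneg_ae hab.le
        (.of_forall fun t => sq_nonneg (f t)) ((hf.pow 2).intervalIntegrable_of_Icc hab.le)]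
  intro t ht
  exact pow_eq_zero_iff two_ne_zero |>.mp
    (Measure.eqOn_Icc_of_ae_eq (μ := volume) hab.ne hae (hf.pow 2) continuousOn_const ht)

lemma hasDerivAt_of_eq_add_integral {a b : ℝ} {u v : ℝ → ℝ} (hv : ContinuousOn v (Icc a b))
    (h : ∀ x ∈ Icc a b, u x = u a + ∫ t in a..x, v t) : ∀ t ∈ Ioo a b, HasDerivAt u (v t) t := by
  intro t ht
  have hprim : HasDerivAt (fun x => u a + ∫ s in a..x, v s) (v t) t :=
    (intervalIntegral.integral_hasDerivAt_right
      ((hv.mono (Icc_subset_Icc_right ht.2.le)).intervalIntegrable_of_Icc ht.1.le)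
      ((hv.mono Ioo_subset_Icc_self).stronglyMeasurableAtFilter isOpen_Ioo t ht)
      ((hv t (Ioo_subset_Icc_self ht)).continuousAt (Icc_mem_nhds ht.1 ht.2))).const_add (u a)
  refine hprim.congr_of_eventuallyEq ?_
  filter_upwards [Ioo_mem_nhds ht.1 ht.2] with x hx using h x (Ioo_subset_Icc_self hx)

/-- `∫_{[a,b]} Dφ(t, u, v) = ∫_{∂[a,b]} φ(t, u) · n`, the outward normals being `-1` at `a` and
`1` at `b`. -/
def DivergenceIdentity (a b : ℝ) (u v : ℝ → ℝ) : Prop :=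
  ∀ φ : ℝ → ℝ → ℝ, ContDiff ℝ 1 (fun p : ℝ × ℝ => φ p.1 p.2) →
    ∫ t in a..b, (deriv (fun s => φ s (u t)) t + deriv (fun r => φ t r) (u t) * v t)
      = φ b (u b) - φ a (u a)

section

variable {a b : ℝ} {u v : ℝ → ℝ}

theorem divergenceIdentity_of_hasDerivAt (hab : a ≤ b) (hu : ContinuousOn u (Icc a b))
    (hv : ContinuousOn v (Icc a b)) (hderiv : ∀ t ∈ Ioo a b, HasDerivAt u (v t) t) :
    DivergenceIdentity a b u v := by
  intro φ hφ
  have hgraph : ContinuousOn (fun t => (t, u t)) (Icc a b) := continuousOn_id.prodMk hu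
  have hint : ContinuousOn
      (fun t => deriv (fun s => φ s (u t)) t + deriv (fun r => φ t r) (u t) * v t) (Icc a b) :=
    ((continuous_deriv_left_slice hφ).comp_continuousOn hgraph).add
      (((continuous_deriv_right_slice hφ).comp_continuousOn hgraph).mul hv)
  exact intervalIntegral.integral_eq_sub_of_hasDerivAt_of_le hab
    (hφ.continuous.comp_continuousOn hgraph)
    (fun t ht => hasDerivAt_comp_graph_s14 (hφ.differentiable one_ne_zero _) (hderiv t ht))
    (hint.intervalIntegrable_of_Icc hab)

namespace DivergenceIdentity

lemma integral_eq_sub (H : DivergenceIdentity a b u v) : ∫ t in a..b, v t = u b - u a := by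
  simpa using H (fun _ y => y) contDiff_snd

lemma integral_mul_add_mul (H : DivergenceIdentity a b u v) {ψ η : ℝ → ℝ}
    (hψ : ∀ x, HasDerivAt ψ (η x) x) (hη : Continuous η) :
    ∫ t in a..b, (u t * η t + ψ t * v t) = u b * ψ b - u a * ψ a := by
  have hψ' : ContDiff ℝ 1 ψ := by
    rw [contDiff_one_iff_deriv]
    exact ⟨fun x => (hψ x).differentiableAt, by simpa [funext fun x => (hψ x).deriv] using hη⟩
  simpa [((hψ _).const_mul _).deriv] using
    H (fun x y => y * ψ x) (contDiff_snd.mul (hψ'.comp contDiff_fst))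

theorem eqOn {u₁ u₂ : ℝ → ℝ} (hab : a < b)
    (H₁ : DivergenceIdentity a b u₁ v) (H₂ : DivergenceIdentity a b u₂ v)
    (hu₁ : ContinuousOn u₁ (Icc a b)) (hu₂ : ContinuousOn u₂ (Icc a b))
    (hv : ContinuousOn v (Icc a b)) (ha : u₁ a = u₂ a) : EqOn u₁ u₂ (Icc a b) := by
  have hb : u₁ b = u₂ b := by linarith [H₁.integral_eq_sub, H₂.integral_eq_sub]
  have horth : ∀ η : ℝ → ℝ, Continuous η → ∫ t in a..b, (u₁ t - u₂ t) * η t = 0 := by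
    intro η hη
    set ψ := fun x => ∫ s in a..x, η s
    have hψ : ∀ x, HasDerivAt ψ (η x) x := fun x => (hη.integral_hasStrictDerivAt a x).hasDerivAt
    have hψc : Continuous ψ := continuous_iff_continuousAt.2 fun x => (hψ x).continuousAt
    have hint : ∀ w : ℝ → ℝ, ContinuousOn w (Icc a b) →
        IntervalIntegrable (fun t => w t * η t + ψ t * v t) volume a b := fun w hw =>
      ((hw.mul hη.continuousOn).add (hψc.continuousOn.mul hv)).intervalIntegrable_of_Icc hab.le
    calc ∫ t in a..b, (u₁ t - u₂ t) * η t
        = (∫ t in a..b, (u₁ t * η t + ψ t * v t)) - ∫ t in a..b, (u₂ t * η t + ψ t * v t) := by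
          rw [← intervalIntegral.integral_sub (hint u₁ hu₁) (hint u₂ hu₂)]
          congr 1 with t
          ring
      _ = 0 := by
          rw [H₁.integral_mul_add_mul hψ hη, H₂.integral_mul_add_mul hψ hη, ha, hb, sub_self]
  intro t ht
  exact sub_eq_zero.mp (eqOn_zero_of_forall_integral_mul_eq_zero hab (hu₁.sub hu₂) horth ht)

end DivergenceIdentity

end

theorem stmt_14
    (t₀ t₁ : ℝ) (ht : t₀ < t₁)
    (u v : ℝ → ℝ)
    (hu : ContinuousOn u (Icc t₀ t₁)) (hv : ContinuousOn v (Icc t₀ t₁)) :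
    (∀ x ∈ Icc t₀ t₁, u x = u t₀ + ∫ t in t₀..x, v t)
    ↔ ∀ φ : ℝ → ℝ → ℝ, ContDiff ℝ 1 (fun p : ℝ × ℝ => φ p.1 p.2) →
        (∫ t in t₀..t₁, (deriv (fun s => φ s (u t)) t + deriv (fun r => φ t r) (u t) * v t))
          = φ t₁ (u t₁) - φ t₀ (u t₀) := by
  refine ⟨fun h => divergenceIdentity_of_hasDerivAt ht.le hu hv
    (hasDerivAt_of_eq_add_integral hv h), fun H => ?_⟩
  set w := fun x => u t₀ + ∫ t in t₀..x, v t with hw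
  have hw_prim : ∀ x ∈ Icc t₀ t₁, w x = w t₀ + ∫ t in t₀..x, v t := fun x _ => by simp [hw]
  have hw_cont : ContinuousOn w (Icc t₀ t₁) := by
    rw [← uIcc_of_le ht.le] at hv ⊢
    exact continuousOn_const.add
      (intervalIntegral.continuousOn_primitive_interval (hv.integrableOn_compact isCompact_uIcc))
  have Hw : DivergenceIdentity t₀ t₁ w v :=
    divergenceIdentity_of_hasDerivAt ht.le hw_cont hv (hasDerivAt_of_eq_add_integral hv hw_prim)
  exact fun x hx => DivergenceIdentity.eqOn ht H Hw hu hw_cont hv (by simp [hw]) hx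
end
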